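/- For every open ball B = B(X, ε) ⊆ X_N (with X ∈ X_N, ε > 0), there exists an integer n ∈ ℕ* such that M^n(B) = X_N, i.e., the n-th iterate of the mutation operator maps B onto the whole phase space. -/

import Mathlib

/-- The discrete metric on ℝ: `ddelta x y = 1` if `x ≠ y`, and `0` otherwise. -/
noncomputable def ddelta (x y : ℝ) : ℝ := if x = y then 0 else 1

/-- `Fdel (x₁, x₂) = |x₁| + δ(0, x₂)`. -/
noncomputable def Fdel (x : ℝ × ℝ) : ℝ := |x.1| + ddelta 0 x.2

/-- A single mutation: a position in `{1,…,N}` together with a nucleotide in `{1,2,3,4}`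
(encoded with `Fin N` and `Fin 4`). -/
abbrev Mut (N : ℕ) := Fin N × Fin 4

/-- A mutations sequence: an infinite sequence of mutations. -/
abbrev MutSeq (N : ℕ) := ℕ → Mut N

/-- A genome of size `N`: a sequence of `N` nucleotides in `{1,2,3,4}` (encoded by `Fin 4`,
where `0,1,2,3` stand for the labels `1,2,3,4`, i.e. `A,C,G,T`). -/
abbrev Genome (N : ℕ) := Fin N → Fin 4

/-- The phase space `X_N = {1,2,3,4}^N × S_N`. -/
abbrev Phase (N : ℕ) := Genome N × MutSeq N

/-- A mutation regarded as a pair of real numbers, using the labels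
`1,…,N` for positions and `1,2,3,4` for nucleotides. -/
noncomputable def mutR {N : ℕ} (m : Mut N) : ℝ × ℝ :=
  ((m.1.1 : ℝ) + 1, (m.2.1 : ℝ) + 1)

/-- `d_G(G, Ǧ) = Σ_{k=1}^{N} δ(G_k, Ǧ_k)`, with `δ` the discrete metric. -/
noncomputable def dG {N : ℕ} (G G' : Genome N) : ℝ :=
  ∑ k : Fin N, if G k = G' k then (0 : ℝ) else 1

/-- `d_S(S, Š) = (9/N) Σ_{k=0}^{∞} F(S^k − Š^k)/10^(k+1)`. -/
noncomputable def dS {N : ℕ} (S S' : MutSeq N) : ℝ :=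
  (9 / N) * ∑' k : ℕ, Fdel (mutR (S k) - mutR (S' k)) / 10 ^ (k + 1)

/-- The distance `d((G,S), (Ǧ,Š)) = d_G(G,Ǧ) + d_S(S,Š)` on the phase space. -/
noncomputable def dX {N : ℕ} (X Y : Phase N) : ℝ := dG X.1 Y.1 + dS X.2 Y.2

/-- The mutation operator `M(G, S) = (G', σ(S))`: the nucleotide of `G` at position `(S⁰)₁`
is replaced by the nucleotide `(S⁰)₂`, and the mutations sequence is shifted. -/
noncomputable def Mop {N : ℕ} (X : Phase N) : Phase N :=
  (Function.update X.1 (X.2 0).1 (X.2 0).2, fun k => X.2 (k + 1))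

/-- A set `U ⊆ X_N` is open for the metric `d` if around any of its points it
contains an open ball of positive radius. -/
def IsOpenD {N : ℕ} (U : Set (Phase N)) : Prop :=
  ∀ x ∈ U, ∃ ε > 0, ∀ y, dX x y < ε → y ∈ U

/-!
Two sequences of mutations that agree on their first `m` terms are within `10⁻ᵐ` of each other,
since each term of `d_S` is at most `N · 10^{-(k+1)}`. So the ball around `X` contains every
point with the genome of `X` whose sequence starts with the first `m` mutations of `X`; after
these `m` steps, `N` further mutations overwrite every position with any prescribed genome, and
whatever follows becomes the remaining sequence.
-/

open Function Stream'

section Streams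

variable {α : Type*}

lemma drop_append_stream_of_length_eq {l : List α} {n : ℕ} (hl : l.length = n) (s : Stream' α) :
    drop n (l ++ₛ s) = s :=
  hl ▸ drop_append_stream l s

lemma get_take_append_stream_of_lt {m k : ℕ} (hk : k < m) (s t : Stream' α) :
    (take m s ++ₛ t).get k = s.get k :=
  (get_append_left k _ t (by rw [length_take]; exact hk)).trans (take_get ..)

end Streams

variable {N : ℕ}

section Dynamics

lemma Mop_iterate_snd (n : ℕ) (X : Phase N) : (Mop^[n] X).2 = drop n X.2 := by
  induction n with
  | zero => rfl
  | succ n ih =>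
    rw [iterate_succ_apply', Mop, ih]
    ext1 k
    exact congrArg X.2 (by omega)

lemma Mop_iterate_succ_fst (n : ℕ) (X : Phase N) :
    (Mop^[n + 1] X).1 = update (Mop^[n] X).1 (X.2 n).1 (X.2 n).2 := by
  rw [iterate_succ_apply', Mop, Mop_iterate_snd]
  show update (Mop^[n] X).1 (X.2 (0 + n)).1 (X.2 (0 + n)).2 = _
  rw [zero_add]

lemma Mop_iterate_fst_apply_of_last {X : Phase N} {k n : ℕ} {p : Fin N} {a : Fin 4}
    (hk : X.2 k = (p, a)) (hkn : k < n) (hlast : ∀ i, k < i → i < n → (X.2 i).1 ≠ p) :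
    (Mop^[n] X).1 p = a := by
  induction n, hkn using Nat.le_induction with
  | base => rw [Mop_iterate_succ_fst, hk, update_self]
  | succ n hkn ih =>
    rw [Mop_iterate_succ_fst, update_of_ne (hlast n hkn (by omega)).symm]
    exact ih fun i hki hin => hlast i hki (by omega)

def genomeWrites (H : Genome N) : List (Mut N) := List.ofFn fun j => (j, H j)

lemma genomeWrites_append_get (H : Genome N) (T : MutSeq N) (j : Fin N) :
    (genomeWrites H ++ₛ T) j = (j, H j) := by
  have hj : j.1 < (genomeWrites H).length := by simp [genomeWrites]
  exact (get_append_left j.1 _ T hj).trans (by simp [genomeWrites])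

lemma Mop_iterate_of_snd_eq_genomeWrites_append {X : Phase N} {H : Genome N} {T : MutSeq N}
    (hX : X.2 = genomeWrites H ++ₛ T) : Mop^[N] X = (H, T) := by
  refine Prod.ext (funext fun p => ?_) ?_
  · refine Mop_iterate_fst_apply_of_last (k := p) ?_ p.2 fun i hpi hiN => ?_
    · rw [hX, genomeWrites_append_get]
    · rw [hX, genomeWrites_append_get H T ⟨i, hiN⟩]
      exact fun h => hpi.ne' (congrArg Fin.val h)
  · rw [Mop_iterate_snd, hX]
    exact drop_append_stream_of_length_eq (List.length_ofFn) T

end Dynamics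

section Distance

lemma Fdel_nonneg (x : ℝ × ℝ) : 0 ≤ Fdel x := by
  unfold Fdel ddelta
  positivity

lemma Fdel_zero : Fdel 0 = 0 := by simp [Fdel, ddelta]

lemma Fdel_mutR_sub_le (a b : Mut N) : Fdel (mutR a - mutR b) ≤ N := by
  have ha : (a.1 : ℝ) + 1 ≤ N := by exact_mod_cast a.1.2
  have hb : (b.1 : ℝ) + 1 ≤ N := by exact_mod_cast b.1.2
  have hδ : ∀ x : ℝ, ddelta 0 x ≤ 1 := fun x => by unfold ddelta; split_ifs <;> norm_num
  have habs : |((a.1 : ℝ) + 1) - ((b.1 : ℝ) + 1)| ≤ N - 1 :=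
    abs_sub_le_iff.2 ⟨by linarith [(b.1.1.cast_nonneg : (0 : ℝ) ≤ b.1.1)],
      by linarith [(a.1.1.cast_nonneg : (0 : ℝ) ≤ a.1.1)]⟩
  simp only [Fdel, mutR, Prod.fst_sub, Prod.snd_sub]
  linarith [hδ ((a.2 : ℝ) + 1 - ((b.2 : ℝ) + 1))]

lemma dG_self (G : Genome N) : dG G G = 0 := by simp [dG]

lemma tsum_le_of_eq_zero_of_le_geometric {f : ℕ → ℝ} {C r : ℝ} {m : ℕ} (hf : ∀ k, 0 ≤ f k)
    (hzero : ∀ k < m, f k = 0) (hle : ∀ k, f k ≤ C * r ^ k) (hr₀ : 0 ≤ r) (hr₁ : r < 1) :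
    ∑' k, f k ≤ C * r ^ m * (1 - r)⁻¹ := by
  have hgeom := summable_geometric_of_lt_one hr₀ hr₁
  have hsum : Summable f := .of_nonneg_of_le hf hle (hgeom.mul_left C)
  calc ∑' k, f k = ∑' k, f (k + m) := by
        rw [← hsum.sum_add_tsum_nat_add m, Finset.sum_eq_zero fun k hk =>
          hzero k (Finset.mem_range.1 hk), zero_add]
    _ ≤ ∑' k, C * r ^ m * r ^ k :=
        ((summable_nat_add_iff m).2 hsum).tsum_le_tsum
          (fun k => (hle _).trans_eq (by ring)) (hgeom.mul_left _)
    _ = C * r ^ m * (1 - r)⁻¹ := by rw [tsum_mul_left, tsum_geometric_of_lt_one hr₀ hr₁]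

lemma dS_le_of_eqOn {S S' : MutSeq N} {m : ℕ} (h : ∀ k < m, S k = S' k) :
    dS S S' ≤ (1 / 10 : ℝ) ^ m := by
  have hN : (0 : ℝ) < N := by exact_mod_cast (S 0).1.pos
  have hbound := tsum_le_of_eq_zero_of_le_geometric (C := N / 10) (r := 1 / 10) (m := m)
    (f := fun k => Fdel (mutR (S k) - mutR (S' k)) / 10 ^ (k + 1))
    (fun k => div_nonneg (Fdel_nonneg _) (by positivity))
    (fun k hk => by simp [h k hk, Fdel_zero])
    (fun k => calc
      _ ≤ N / (10 : ℝ) ^ (k + 1) := by gcongr; exact Fdel_mutR_sub_le _ _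
      _ = N / 10 * (1 / 10) ^ k := by rw [one_div_pow, pow_succ]; ring)
    (by norm_num) (by norm_num)
  calc dS S S' ≤ 9 / N * (N / 10 * (1 / 10) ^ m * (1 - 1 / 10)⁻¹) :=
        mul_le_mul_of_nonneg_left hbound (by positivity)
    _ = (1 / 10 : ℝ) ^ m := by field_simp; norm_num

end Distance

theorem Mop_ball_onto_general (N : ℕ) :
    ∀ X : Phase N, ∀ ε > (0 : ℝ),
      ∃ n : ℕ, 1 ≤ n ∧
        (Mop (N := N))^[n] '' {Y : Phase N | dX X Y < ε} = Set.univ := by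
  intro X ε hε
  have hN : 0 < N := (X.2 0).1.pos
  obtain ⟨m, hm⟩ := exists_pow_lt_of_lt_one hε (by norm_num : (1 / 10 : ℝ) < 1)
  refine ⟨m + N, by omega, Set.eq_univ_of_forall fun Z => ?_⟩
  -- the preimage of `Z`: the first `m` mutations of `X`, then `N` mutations writing `Z.1`, then `Z.2`
  set S := take m X.2 ++ₛ (genomeWrites Z.1 ++ₛ Z.2)
  have hagree : ∀ k < m, X.2 k = S k := fun k hk =>
    (get_take_append_stream_of_lt hk X.2 _).symm
  refine ⟨(X.1, S), ?_, ?_⟩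
  · show dG X.1 X.1 + dS X.2 S < ε
    rw [dG_self, zero_add]
    exact (dS_le_of_eqOn hagree).trans_lt hm
  · rw [add_comm, iterate_add_apply]
    refine Mop_iterate_of_snd_eq_genomeWrites_append ?_
    rw [Mop_iterate_snd]
    exact drop_append_stream_of_length_eq (length_take m X.2) _

/-- For every open ball `B(X, ε) ⊆ X_N`, there exists `n ∈ ℕ*` such that the `n`-th
iterate of the mutation operator maps this ball onto the whole phase space:
`M^n(B(X, ε)) = X_N`. -/
theorem Mop_ball_onto (N : ℕ) (hN : 1 ≤ N) :
    ∀ X : Phase N, ∀ ε > (0 : ℝ),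
      ∃ n : ℕ, 1 ≤ n ∧
        (Mop (N := N))^[n] '' {Y : Phase N | dX X Y < ε} = Set.univ :=
  Mop_ball_onto_general N
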